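/- arXiv:2412.16318 — 2 statements merged into one kernel-verified Lean document; each statement's English description precedes it below -/
import Mathlib

section
/- Let $\{x_t\}_{t=1}^T$ be a sequence with $x_t \in [0,B]$ for all $t \in [T]$. Then $\sum_{t=1}^T \frac{x_t}{\sqrt{1+\sum_{s=1}^{t-1} x_s}} \leq 4\sqrt{1+\frac{1}{2}\sum_{t=1}^T x_t}+B$. -/
/-!
With `S` the running sum, the potential `Φ(S) = 2√2 √(1 + S) + min S B` grows by at least
`x / √(1 + S)` at every step `0 ≤ x ≤ B`. While `x ≤ 1 + S` the square-root term alone pays for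
the step; a step `x > 1 + S` forces `S < B`, so the `min S B` term gains about `x - S`, which
covers it. Telescoping bounds the sum by `Φ(∑ x) - Φ(0)`, and `2√2 √(1 + Q) ≤ 4 √(1 + Q / 2)`.
-/
open Finset Real

lemma div_sqrt_le_of_le {a x : ℝ} (ha : 0 < a) (hx0 : 0 ≤ x) (hxa : x ≤ a) :
    x / √a ≤ 2 * √2 * (√(a + x) - √a) := by
  have hu : 0 < √a := sqrt_pos.2 ha
  have hv : √(a + x) ^ 2 = a + x := sq_sqrt (by linarith)
  have hvu : √a ≤ √(a + x) := sqrt_le_sqrt (by linarith)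
  have hv_le : √(a + x) ≤ √2 * √a := by
    rw [← sqrt_mul zero_le_two]; exact sqrt_le_sqrt (by linarith)
  rw [div_le_iff₀ hu]
  -- `x = (v - u)(v + u)` with `v + u ≤ (1 + √2) u ≤ 2√2 u`
  nlinarith [sq_sqrt ha.le, mul_le_mul_of_nonneg_left hv_le (sub_nonneg.2 hvu),
    mul_nonneg (sub_nonneg.2 hvu) hu.le, one_lt_sqrt_two, sqrt_two_lt_three_halves]

lemma div_sqrt_le_of_ge {a x : ℝ} (ha : 1 ≤ a) (hax : a ≤ x) :
    x / √a ≤ 2 * √2 * (√(a + x) - √a) + (x - (a - 1)) := by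
  have hu : 1 ≤ √a := one_le_sqrt.2 ha
  have hv_ge : √2 * √a ≤ √(a + x) := by
    rw [← sqrt_mul zero_le_two]; exact sqrt_le_sqrt (by linarith)
  have hgain : √a - 1 ≤ 2 * √2 * (√(a + x) - √a) := by
    have h22 : 0 ≤ 2 * √2 := by positivity
    nlinarith [mul_le_mul_of_nonneg_left hv_ge h22, mul_self_sqrt (zero_le_two : (0 : ℝ) ≤ 2),
      mul_le_mul_of_nonneg_right sqrt_two_lt_three_halves.le (by linarith : (0 : ℝ) ≤ √a)]
  rw [div_le_iff₀ (by linarith)]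
  nlinarith [sq_sqrt (show 0 ≤ a by linarith),
    mul_le_mul_of_nonneg_right hgain (by linarith : (0 : ℝ) ≤ √a),
    mul_le_mul_of_nonneg_right hax (sub_nonneg.2 hu)]

noncomputable def potential (B S : ℝ) : ℝ := 2 * √2 * √(1 + S) + min S B

lemma div_sqrt_le_potential_sub {B S x : ℝ} (hS : 0 ≤ S) (hx0 : 0 ≤ x) (hxB : x ≤ B) :
    x / √(1 + S) ≤ potential B (S + x) - potential B S := by
  have hsum : 1 + (S + x) = 1 + S + x := by ring
  simp only [potential, hsum]
  rcases le_or_gt x (1 + S) with hsmall | hlarge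
  · have := div_sqrt_le_of_le (by linarith) hx0 hsmall
    have : min S B ≤ min (S + x) B := min_le_min_right B (by linarith)
    linarith
  · have := div_sqrt_le_of_ge (by linarith) hlarge.le
    have : min S B = S := min_eq_left (by linarith)
    have : x ≤ min (S + x) B := le_min (by linarith) hxB
    linarith

lemma sum_div_sqrt_le_potential_sub (B : ℝ) (x : ℕ → ℝ) (T : ℕ)
    (hx : ∀ t ∈ Icc 1 T, 0 ≤ x t ∧ x t ≤ B) :
    ∑ t ∈ Icc 1 T, x t / √(1 + ∑ s ∈ Icc 1 (t - 1), x s)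
      ≤ potential B (∑ t ∈ Icc 1 T, x t) - potential B 0 := by
  induction T with
  | zero => simp
  | succ T ih =>
    have hx' : ∀ t ∈ Icc 1 T, 0 ≤ x t ∧ x t ≤ B := fun t ht =>
      hx t (Icc_subset_Icc_right T.le_succ ht)
    obtain ⟨hx0, hxB⟩ := hx (T + 1) (right_mem_Icc.2 (by omega))
    have hS : 0 ≤ ∑ s ∈ Icc 1 T, x s := sum_nonneg fun t ht => (hx' t ht).1
    rw [sum_Icc_succ_top (by omega), sum_Icc_succ_top (by omega), Nat.add_sub_cancel]
    linarith [ih hx', div_sqrt_le_potential_sub hS hx0 hxB]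

lemma potential_sub_potential_zero_le {B : ℝ} (hB : 0 ≤ B) (Q : ℝ) :
    potential B Q - potential B 0 ≤ 4 * √(1 + (1 / 2) * Q) + B := by
  have hQ : 2 * √2 * √(1 + Q) ≤ 4 * √(1 + (1 / 2) * Q) := by
    have h4 : (4 : ℝ) = 2 * √2 * √2 := by rw [mul_assoc, mul_self_sqrt zero_le_two]; norm_num
    rw [h4, mul_assoc (2 * √2), ← sqrt_mul zero_le_two]
    gcongr
    linarith
  simp only [potential, add_zero, sqrt_one, mul_one, min_eq_left hB]
  linarith [min_le_right Q B, sqrt_nonneg 2]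

theorem stmt_0_general (T : ℕ) (B : ℝ) (hB : 0 < B) (x : ℕ → ℝ)
    (hx : ∀ t ∈ Finset.Icc 1 T, 0 ≤ x t ∧ x t ≤ B) :
    ∑ t ∈ Finset.Icc 1 T, x t / Real.sqrt (1 + ∑ s ∈ Finset.Icc 1 (t - 1), x s)
      ≤ 4 * Real.sqrt (1 + (1 / 2) * ∑ t ∈ Finset.Icc 1 T, x t) + B :=
  (sum_div_sqrt_le_potential_sub B x T hx).trans (potential_sub_potential_zero_le hB.le _)

theorem stmt_0 (T : ℕ) (hT : 0 < T) (B : ℝ) (hB : 0 < B) (x : ℕ → ℝ)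
    (hx : ∀ t ∈ Finset.Icc 1 T, 0 ≤ x t ∧ x t ≤ B) :
    ∑ t ∈ Finset.Icc 1 T, x t / Real.sqrt (1 + ∑ s ∈ Finset.Icc 1 (t - 1), x s)
      ≤ 4 * Real.sqrt (1 + (1 / 2) * ∑ t ∈ Finset.Icc 1 T, x t) + B :=
  stmt_0_general T B hB x hx
end

section
/- Let $S_t \subseteq \mathbb{R}^d$ be a convex set, $z > 0$, $x$ a unit vector, and $\epsilon > 0$ with $2\epsilon \le z/2$ (i.e., the half-space shift satisfies $z + 2\epsilon \le \frac{3}{2}z$). Suppose $y \in \mathbb{R}$ is chosen so that $\mathrm{Vol}(\{v \in S_t + zB : \langle v, x\rangle \le y - \epsilon\}) = \frac{1}{2}\mathrm{Vol}(S_t + zB)$, and let $S_{t+1} = \{v \in S_t : \langle v, x\rangle \le y + \epsilon\}$. If additionally $\mathrm{Vol}(S_t + zB) \geq 4zC$ where $C$ is the maximal cross-sectional volume of $S_t + zB$ along $x$, then $\mathrm{Vol}(S_{t+1} + zB) \leq \frac{7}{8}\mathrm{Vol}(S_t + zB)$. -/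
/-!
Every point of `S_{t+1} + zB` has `⟪v, x⟫ ≤ y + ε + z`, so `S_{t+1} + zB` lies in the part of
`K = S_t + zB` below `y - ε` (half of `K` by the choice of `y`) together with the slab of `K`
between `y - ε` and `y + ε + z`. By Fubini along `x`, that slab has volume at most its width
`z + 2ε ≤ 3z/2` times the largest section `C`, hence at most `3/8 · Vol K`.
-/

open MeasureTheory
open scoped InnerProductSpace ENNReal Pointwise

theorem LipschitzWith.volume_image_le_hausdorffMeasure {X : Type*} [EMetricSpace X]
    [MeasurableSpace X] [BorelSpace X] {m : ℕ} {f : X → (Fin m → ℝ)} (hf : LipschitzWith 1 f)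
    (s : Set X) : volume (f '' s) ≤ μH[(m : ℝ)] s := by
  have hμH : (μH[(m : ℝ)] : Measure (Fin m → ℝ)) = volume := by
    simpa using hausdorffMeasure_pi_real (ι := Fin m)
  simpa [hμH] using hf.hausdorffMeasure_image_le (Nat.cast_nonneg m) s

theorem EuclideanSpace.exists_measurePreserving_inner_prod {m : ℕ}
    {x : EuclideanSpace ℝ (Fin (m + 1))} (hx : ‖x‖ = 1) :
    ∃ g : EuclideanSpace ℝ (Fin (m + 1)) ≃ᵐ ℝ × (Fin m → ℝ), MeasurePreserving g ∧
      (∀ v, (g v).1 = ⟪v, x⟫_ℝ) ∧ LipschitzWith 1 (fun v => (g v).2) := by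
  have horth : Orthonormal ℝ (({0} : Set (Fin (m + 1))).domRestrict fun _ => x) :=
    ⟨fun _ => hx, fun i j hij => (hij (Subtype.ext (i.2.trans j.2.symm))).elim⟩
  obtain ⟨B, hB⟩ := horth.exists_orthonormalBasis_extension_of_card_eq (by simp)
  let g := (B.measurableEquiv.trans (MeasurableEquiv.toLp 2 (Fin (m + 1) → ℝ)).symm).trans
    (MeasurableEquiv.piFinSuccAbove (fun _ => ℝ) 0)
  refine ⟨g, ?_, fun v => ?_, ?_⟩
  · exact (volume_preserving_piFinSuccAbove (fun _ => ℝ) 0).comp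
      ((EuclideanSpace.volume_preserving_symm_measurableEquiv_toLp _).comp
        B.measurePreserving_measurableEquiv)
  · show B.repr v 0 = _
    rw [B.repr_apply_apply, hB 0 rfl, real_inner_comm]
  · have htail : LipschitzWith 1 (Fin.tail : (Fin (m + 1) → ℝ) → Fin m → ℝ) :=
      LipschitzWith.of_edist_le fun w w' => by
        simp only [edist_pi_def]
        exact Finset.sup_le fun j _ =>
          Finset.le_sup (f := fun i => edist (w i) (w' i)) (Finset.mem_univ j.succ)
    have h := (htail.comp (PiLp.lipschitzWith_ofLp 2 _)).comp B.repr.isometry.lipschitz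
    simp only [mul_one] at h
    exact h

theorem MeasurableSet.volume_inner_mem_Ioc_le {m : ℕ} {A : Set (EuclideanSpace ℝ (Fin (m + 1)))}
    (hA : MeasurableSet A) {x : EuclideanSpace ℝ (Fin (m + 1))} (hx : ‖x‖ = 1) (a b : ℝ) :
    volume {v ∈ A | ⟪v, x⟫_ℝ ∈ Set.Ioc a b}
      ≤ ENNReal.ofReal (b - a) * ⨆ c : ℝ, μH[(m : ℝ)] {v ∈ A | ⟪v, x⟫_ℝ = c} := by
  obtain ⟨g, hg, hg_fst, hg_snd⟩ := EuclideanSpace.exists_measurePreserving_inner_prod hx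
  set S := {v ∈ A | ⟪v, x⟫_ℝ ∈ Set.Ioc a b}
  have hS : MeasurableSet S := hA.inter (measurableSet_Ioc.preimage (by fun_prop))
  have hslice : ∀ t, volume (Prod.mk t ⁻¹' (g.symm ⁻¹' S))
      ≤ (Set.Ioc a b).indicator (fun _ => ⨆ c, μH[(m : ℝ)] {v ∈ A | ⟪v, x⟫_ℝ = c}) t := by
    intro t
    have hmem : ∀ w ∈ Prod.mk t ⁻¹' (g.symm ⁻¹' S),
        g.symm (t, w) ∈ A ∧ ⟪g.symm (t, w), x⟫_ℝ = t ∧ (g (g.symm (t, w))).2 = w := by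
      intro w hw
      refine ⟨hw.1, ?_, by simp⟩
      rw [← hg_fst, g.apply_symm_apply]
    by_cases ht : t ∈ Set.Ioc a b
    · rw [Set.indicator_of_mem ht]
      refine le_trans (measure_mono ?_) ((hg_snd.volume_image_le_hausdorffMeasure _).trans
        (le_iSup (fun c => μH[(m : ℝ)] {v ∈ A | ⟪v, x⟫_ℝ = c}) t))
      intro w hw
      obtain ⟨hA', ht', hw'⟩ := hmem w hw
      exact ⟨_, ⟨hA', ht'⟩, hw'⟩
    · rw [Set.indicator_of_notMem ht]
      refine (measure_mono_null (fun w hw => ht ?_) measure_empty).le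
      exact (hmem w hw).2.1 ▸ hw.2
  calc volume S = volume (g.symm ⁻¹' S) :=
        ((hg.symm g).measure_preimage hS.nullMeasurableSet).symm
    _ = ∫⁻ t, volume (Prod.mk t ⁻¹' (g.symm ⁻¹' S)) := by
        rw [Measure.volume_eq_prod, Measure.prod_apply (g.symm.measurable hS)]
    _ ≤ ∫⁻ t, (Set.Ioc a b).indicator (fun _ => ⨆ c, μH[(m : ℝ)] {v ∈ A | ⟪v, x⟫_ℝ = c}) t :=
        lintegral_mono hslice
    _ = _ := by
        rw [lintegral_indicator_const measurableSet_Ioc, Real.volume_Ioc, mul_comm]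

theorem NullMeasurableSet.volume_inner_mem_Ioc_le {m : ℕ}
    {A : Set (EuclideanSpace ℝ (Fin (m + 1)))} (hA : NullMeasurableSet A)
    {x : EuclideanSpace ℝ (Fin (m + 1))} (hx : ‖x‖ = 1) (a b : ℝ) :
    volume {v ∈ A | ⟪v, x⟫_ℝ ∈ Set.Ioc a b}
      ≤ ENNReal.ofReal (b - a) * ⨆ c : ℝ, μH[(m : ℝ)] {v ∈ A | ⟪v, x⟫_ℝ = c} := by
  obtain ⟨A', hA'A, hA', hA'_ae⟩ := hA.exists_measurable_subset_ae_eq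
  calc volume {v ∈ A | ⟪v, x⟫_ℝ ∈ Set.Ioc a b}
      = volume {v ∈ A' | ⟪v, x⟫_ℝ ∈ Set.Ioc a b} :=
        measure_congr (hA'_ae.symm.inter (ae_eq_refl _))
    _ ≤ ENNReal.ofReal (b - a) * ⨆ c : ℝ, μH[(m : ℝ)] {v ∈ A' | ⟪v, x⟫_ℝ = c} :=
        hA'.volume_inner_mem_Ioc_le hx a b
    _ ≤ _ := by gcongr

theorem setOf_inner_le_add_smul_unitClosedBall_subset {E : Type*} [NormedAddCommGroup E]
    [InnerProductSpace ℝ E] {S : Set E} {x : E} (hx : ‖x‖ ≤ 1) {z : ℝ} (hz : 0 ≤ z) (c : ℝ) :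
    {v ∈ S | ⟪v, x⟫_ℝ ≤ c} + z • Metric.closedBall (0 : E) 1
      ⊆ {v ∈ S + z • Metric.closedBall (0 : E) 1 | ⟪v, x⟫_ℝ ≤ c + z} := by
  rintro _ ⟨u, ⟨hu, huc⟩, s, hs, rfl⟩
  refine ⟨Set.add_mem_add hu hs, ?_⟩
  rw [smul_unitClosedBall_of_nonneg hz, mem_closedBall_zero_iff] at hs
  have : ⟪s, x⟫_ℝ ≤ z := calc
    ⟪s, x⟫_ℝ ≤ ‖s‖ * ‖x‖ := real_inner_le_norm s x
    _ ≤ z * 1 := by gcongr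
    _ = z := mul_one z
  rw [inner_add_left]
  linarith

theorem stmt_7_general (d : ℕ) (St : Set (EuclideanSpace ℝ (Fin d))) (hconv : Convex ℝ St)
    (z ε y : ℝ) (hz : 0 < z) (hεz : 2 * ε ≤ z / 2)
    (x : EuclideanSpace ℝ (Fin d)) (hx : ‖x‖ = 1)
    (C : ℝ≥0∞)
    (hC : C = ⨆ c : ℝ, μH[(d : ℝ) - 1]
      {v ∈ St + z • Metric.closedBall (0 : EuclideanSpace ℝ (Fin d)) 1 | ⟪v, x⟫_ℝ = c})
    (hhalf : volume {v ∈ St + z • Metric.closedBall (0 : EuclideanSpace ℝ (Fin d)) 1 |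
        ⟪v, x⟫_ℝ ≤ y - ε}
      = volume (St + z • Metric.closedBall (0 : EuclideanSpace ℝ (Fin d)) 1) / 2)
    (hvol : ENNReal.ofReal (4 * z) * C
      ≤ volume (St + z • Metric.closedBall (0 : EuclideanSpace ℝ (Fin d)) 1)) :
    volume ({v ∈ St | ⟪v, x⟫_ℝ ≤ y + ε}
        + z • Metric.closedBall (0 : EuclideanSpace ℝ (Fin d)) 1)
      ≤ (7 / 8 : ℝ≥0∞) *
        volume (St + z • Metric.closedBall (0 : EuclideanSpace ℝ (Fin d)) 1) := by
  obtain ⟨m, rfl⟩ : ∃ m, d = m + 1 :=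
    Nat.exists_eq_add_one.2 <| Nat.pos_of_ne_zero fun hd => by
      subst hd; simp [Subsingleton.elim x 0] at hx
  set K := St + z • Metric.closedBall (0 : EuclideanSpace ℝ (Fin (m + 1))) 1
  have hK : Convex ℝ K := hconv.add ((convex_closedBall _ _).smul z)
  have hslab : volume {v ∈ K | ⟪v, x⟫_ℝ ∈ Set.Ioc (y - ε) (y + ε + z)} ≤ 3 / 8 * volume K :=
    calc volume {v ∈ K | ⟪v, x⟫_ℝ ∈ Set.Ioc (y - ε) (y + ε + z)}
        ≤ ENNReal.ofReal (y + ε + z - (y - ε)) * C := by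
          convert NullMeasurableSet.volume_inner_mem_Ioc_le (hK.nullMeasurableSet volume) hx _ _
            using 3
          rw [hC]; push_cast; ring_nf
      _ ≤ ENNReal.ofReal (3 / 8) * (ENNReal.ofReal (4 * z) * C) := by
          rw [← mul_assoc, ← ENNReal.ofReal_mul (by norm_num)]
          gcongr
          linarith
      _ ≤ 3 / 8 * volume K := by
          rw [ENNReal.ofReal_div_of_pos (by norm_num)]
          gcongr <;> simp
  have h78 : (2⁻¹ + 3 / 8 : ℝ≥0∞) = 7 / 8 := by
    have h : ((2⁻¹ + 3 / 8 : NNReal) : ℝ≥0∞) = ((7 / 8 : NNReal) : ℝ≥0∞) := by norm_num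
    simpa [ENNReal.coe_div] using h
  calc volume ({v ∈ St | ⟪v, x⟫_ℝ ≤ y + ε} + _)
      ≤ volume {v ∈ K | ⟪v, x⟫_ℝ ≤ y + ε + z} :=
        measure_mono (setOf_inner_le_add_smul_unitClosedBall_subset hx.le hz.le _)
    _ ≤ volume ({v ∈ K | ⟪v, x⟫_ℝ ≤ y - ε}
          ∪ {v ∈ K | ⟪v, x⟫_ℝ ∈ Set.Ioc (y - ε) (y + ε + z)}) :=
        measure_mono fun v ⟨hv, hvb⟩ => (le_or_gt _ _).imp (⟨hv, ·⟩) (⟨hv, ·, hvb⟩)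
    _ ≤ volume K / 2 + 3 / 8 * volume K := (measure_union_le _ _).trans (by rw [hhalf]; gcongr)
    _ = 7 / 8 * volume K := by rw [ENNReal.div_eq_inv_mul, ← add_mul, h78]

theorem stmt_7 (d : ℕ) (St : Set (EuclideanSpace ℝ (Fin d))) (hconv : Convex ℝ St)
    (z ε y : ℝ) (hz : 0 < z) (hε : 0 < ε) (hεz : 2 * ε ≤ z / 2)
    (x : EuclideanSpace ℝ (Fin d)) (hx : ‖x‖ = 1)
    (C : ℝ≥0∞)
    (hC : C = ⨆ c : ℝ, μH[(d : ℝ) - 1]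
      {v ∈ St + z • Metric.closedBall (0 : EuclideanSpace ℝ (Fin d)) 1 | ⟪v, x⟫_ℝ = c})
    (hhalf : volume {v ∈ St + z • Metric.closedBall (0 : EuclideanSpace ℝ (Fin d)) 1 |
        ⟪v, x⟫_ℝ ≤ y - ε}
      = volume (St + z • Metric.closedBall (0 : EuclideanSpace ℝ (Fin d)) 1) / 2)
    (hvol : ENNReal.ofReal (4 * z) * C
      ≤ volume (St + z • Metric.closedBall (0 : EuclideanSpace ℝ (Fin d)) 1)) :
    volume ({v ∈ St | ⟪v, x⟫_ℝ ≤ y + ε}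
        + z • Metric.closedBall (0 : EuclideanSpace ℝ (Fin d)) 1)
      ≤ (7 / 8 : ℝ≥0∞) *
        volume (St + z • Metric.closedBall (0 : EuclideanSpace ℝ (Fin d)) 1) :=
  stmt_7_general d St hconv z ε y hz hεz x hx C hC hhalf hvol
end
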